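/- Let (X,≤) be a partially ordered set and p a partial metric on X making (X,p) complete. Let f : X → X be monotone non-decreasing such that there exists 0 ≤ c < 1 with p(fx,fy) ≤ c·p(x,y) whenever y ≤ x. Suppose there exists x_0 with x_0 ≤ f(x_0), and either f is continuous in (X,p), or every non-decreasing convergent sequence {x_n} with limit x satisfies x_n ≤ x for all n. Then f has a fixed point u with p(u,u) = 0. -/

import Mathlib

/-!
The Picard orbit `x₀ ≤ f x₀ ≤ f² x₀ ≤ ⋯` is monotone, so the contraction applies to consecutive
terms and `p (fⁿ⁺¹ x₀) (fⁿ x₀) ≤ cⁿ p (f x₀) x₀`. The triangle inequality of `p` (with the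
self-distance dropped) sums these to `p (fⁿ x₀) (fᵐ x₀) ≤ c^(min m n) p (f x₀) x₀ / (1 - c) → 0`,
so completeness gives a limit `x` with `p x x = 0`. Either alternative hypothesis forces
`p (fⁿ⁺¹ x₀) (f x) → 0`: by continuity, or by contracting the comparable pair `fⁿ x₀ ≤ x`.
Since `p y z ≤ p (fⁿ⁺¹ x₀) y + p (fⁿ⁺¹ x₀) z`, the two limits give `p x (f x) = 0`, hence `f x = x`.
-/

noncomputable section
open Filter Topology

def IsPartialMetric {X : Type*} (p : X → X → ℝ) : Prop :=
  (∀ x y, 0 ≤ p x y) ∧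
  (∀ x y, x = y ↔ (p x x = p x y ∧ p x y = p y y)) ∧
  (∀ x y, p x x ≤ p x y) ∧
  (∀ x y, p x y = p y x) ∧
  (∀ x y z, p x y ≤ p x z + p z y - p z z)

/-- `u` converges to `x` in the partial metric space `(X, p)`. -/
def PConvergesTo {X : Type*} (p : X → X → ℝ) (u : ℕ → X) (x : X) : Prop :=
  Tendsto (fun n => p (u n) x) atTop (𝓝 (p x x))

/-- `u` converges properly to `x` in `(X, p)`. -/
def PProperConvergesTo {X : Type*} (p : X → X → ℝ) (u : ℕ → X) (x : X) : Prop :=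
  Tendsto (fun n => p (u n) x) atTop (𝓝 (p x x)) ∧
  Tendsto (fun n => p (u n) (u n)) atTop (𝓝 (p x x))

/-- `u` is a Cauchy sequence in `(X, p)`: `lim_{n,m} p (u n) (u m)` exists (finite). -/
def PCauchy {X : Type*} (p : X → X → ℝ) (u : ℕ → X) : Prop :=
  ∃ l : ℝ, Tendsto (fun nm : ℕ × ℕ => p (u nm.1) (u nm.2)) atTop (𝓝 l)

/-- `(X, p)` is a complete partial metric space. -/
def PComplete {X : Type*} (p : X → X → ℝ) : Prop :=
  ∀ u : ℕ → X, ∀ l : ℝ,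
    Tendsto (fun nm : ℕ × ℕ => p (u nm.1) (u nm.2)) atTop (𝓝 l) →
    ∃ x, p x x = l ∧ Tendsto (fun n => p (u n) x) atTop (𝓝 l)

/-- `f` is continuous on `(X, p)` (w.r.t. both `p` and the induced metric `pˢ`). -/
def PContinuousMap {X : Type*} (p : X → X → ℝ) (f : X → X) : Prop :=
  ∀ (u : ℕ → X) (x : X),
    (PConvergesTo p u x → PConvergesTo p (fun n => f (u n)) (f x)) ∧
    (PProperConvergesTo p u x → PProperConvergesTo p (fun n => f (u n)) (f x))


namespace IsPartialMetric

variable {X : Type*} {p : X → X → ℝ}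

theorem nonneg (hp : IsPartialMetric p) (x y : X) : 0 ≤ p x y := hp.1 x y

theorem comm (hp : IsPartialMetric p) (x y : X) : p x y = p y x := hp.2.2.2.1 x y

theorem self_le (hp : IsPartialMetric p) (x y : X) : p x x ≤ p x y := hp.2.2.1 x y

theorem le_add (hp : IsPartialMetric p) (x y z : X) : p x y ≤ p x z + p z y := by
  linarith [hp.2.2.2.2 x y z, hp.nonneg z z]

theorem eq_of_eq_zero (hp : IsPartialMetric p) {x y : X} (h : p x y = 0) : x = y := by
  have hx : p x x = 0 := le_antisymm (h ▸ hp.self_le x y) (hp.nonneg x x)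
  have hy : p y y = 0 := le_antisymm (h ▸ hp.comm x y ▸ hp.self_le y x) (hp.nonneg y y)
  exact (hp.2.1 x y).2 ⟨hx.trans h.symm, h.trans hy.symm⟩

theorem eq_of_tendsto_zero (hp : IsPartialMetric p) {u : ℕ → X} {x y : X}
    (hx : Tendsto (fun n => p (u n) x) atTop (𝓝 0))
    (hy : Tendsto (fun n => p (u n) y) atTop (𝓝 0)) : x = y := by
  have hsum : Tendsto (fun n => p (u n) x + p (u n) y) atTop (𝓝 0) := by
    simpa using hx.add hy
  refine hp.eq_of_eq_zero (le_antisymm ?_ (hp.nonneg x y))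
  refine ge_of_tendsto hsum (Eventually.of_forall fun n => ?_)
  simpa only [hp.comm x (u n)] using hp.le_add x y (u n)

theorem le_sum_Ico_of_succ_le (hp : IsPartialMetric p) {u : ℕ → X} {d : ℕ → ℝ}
    (hd : ∀ n, p (u (n + 1)) (u n) ≤ d n) {m n : ℕ} (hmn : m < n) :
    p (u n) (u m) ≤ ∑ i ∈ Finset.Ico m n, d i := by
  induction n, hmn using Nat.le_induction with
  | base => simpa using hd m
  | succ n hmn ih =>
    rw [Finset.sum_Ico_succ_top (by omega)]
    linarith [hp.le_add (u (n + 1)) (u m) (u n), hd n]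

theorem tendsto_zero_of_succ_le_geometric (hp : IsPartialMetric p) {u : ℕ → X} {c M : ℝ}
    (hc0 : 0 ≤ c) (hc1 : c < 1) (hu : ∀ n, p (u (n + 1)) (u n) ≤ c ^ n * M) :
    Tendsto (fun nm : ℕ × ℕ => p (u nm.1) (u nm.2)) atTop (𝓝 0) := by
  have hM : 0 ≤ M := by simpa using (hp.nonneg _ _).trans (hu 0)
  have hlt : ∀ {m n}, m < n → p (u n) (u m) ≤ c ^ m * (M / (1 - c)) := fun {m n} hmn =>
    calc p (u n) (u m) ≤ ∑ i ∈ Finset.Ico m n, c ^ i * M := hp.le_sum_Ico_of_succ_le hu hmn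
      _ = (∑ i ∈ Finset.Ico m n, c ^ i) * M := (Finset.sum_mul ..).symm
      _ ≤ c ^ m / (1 - c) * M := by gcongr; exact geom_sum_Ico_le_of_lt_one hc0 hc1
      _ = c ^ m * (M / (1 - c)) := by ring
  have hle : ∀ {m n}, m ≤ n → p (u n) (u m) ≤ c ^ m * (M / (1 - c)) := fun {m n} hmn => by
    rcases hmn.eq_or_lt with rfl | hmn
    · exact (hp.self_le _ _).trans (hp.comm (u m) _ ▸ hlt m.lt_succ_self)
    · exact hlt hmn
  have hbound : ∀ nm : ℕ × ℕ, p (u nm.1) (u nm.2) ≤ c ^ min nm.1 nm.2 * (M / (1 - c)) := by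
    rintro ⟨n, m⟩
    rcases le_total m n with h | h
    · simpa [min_eq_right h] using hle h
    · simpa [min_eq_left h, hp.comm (u n)] using hle h
  have hmin : Tendsto (fun nm : ℕ × ℕ => min nm.1 nm.2) atTop atTop := by
    rw [← prod_atTop_atTop_eq]
    exact tendsto_inf_atTop _ tendsto_fst tendsto_snd
  have hgeom : Tendsto (fun k : ℕ => c ^ k * (M / (1 - c))) atTop (𝓝 0) := by
    simpa using (tendsto_pow_atTop_nhds_zero_of_lt_one hc0 hc1).mul_const (M / (1 - c))
  exact squeeze_zero (fun _ => hp.nonneg _ _) hbound (hgeom.comp hmin)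

end IsPartialMetric

theorem iterate_succ_le_geometric {X : Type*} [Preorder X] {p : X → X → ℝ} {f : X → X}
    (hf : Monotone f) {c : ℝ} (hc0 : 0 ≤ c) (hcontr : ∀ x y : X, y ≤ x → p (f x) (f y) ≤ c * p x y)
    {x₀ : X} (hx₀ : x₀ ≤ f x₀) (n : ℕ) :
    p (f^[n + 1] x₀) (f^[n] x₀) ≤ c ^ n * p (f x₀) x₀ := by
  induction n with
  | zero => simp
  | succ n ih =>
    have hle : f^[n] x₀ ≤ f^[n + 1] x₀ := hf.monotone_iterate_of_le_map hx₀ n.le_succ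
    calc p (f^[n + 2] x₀) (f^[n + 1] x₀)
        = p (f (f^[n + 1] x₀)) (f (f^[n] x₀)) := by
          simp only [Function.iterate_succ_apply']
      _ ≤ c * p (f^[n + 1] x₀) (f^[n] x₀) := hcontr _ _ hle
      _ ≤ c * (c ^ n * p (f x₀) x₀) := by gcongr
      _ = c ^ (n + 1) * p (f x₀) x₀ := by ring

theorem fixed_point_banach_type {X : Type*} [PartialOrder X] (p : X → X → ℝ)
    (hp : IsPartialMetric p) (hcomp : PComplete p)
    (f : X → X) (hf : Monotone f)
    (c : ℝ) (hc0 : 0 ≤ c) (hc1 : c < 1)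
    (hcontr : ∀ x y : X, y ≤ x → p (f x) (f y) ≤ c * p x y)
    (x₀ : X) (hx₀ : x₀ ≤ f x₀)
    (hcont : PContinuousMap p f ∨
      ∀ (u : ℕ → X) (x : X), Monotone u → PConvergesTo p u x → ∀ n, u n ≤ x) :
    ∃ u : X, f u = u ∧ p u u = 0 := by
  set u : ℕ → X := fun n => f^[n] x₀
  obtain ⟨x, hxx, hux⟩ := hcomp u 0 (hp.tendsto_zero_of_succ_le_geometric hc0 hc1
    (iterate_succ_le_geometric hf hc0 hcontr hx₀))
  have hu_conv : PConvergesTo p u x := by rwa [PConvergesTo, hxx]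
  have hfu : Tendsto (fun n => p (f (u n)) (f x)) atTop (𝓝 0) := by
    rcases hcont with hcont | hu_le
    · have hfx : p (f x) (f x) = 0 :=
        le_antisymm (by simpa [hxx] using hcontr x x le_rfl) (hp.nonneg _ _)
      simpa only [PConvergesTo, hfx] using (hcont u x).1 hu_conv
    · have hle := hu_le u x (hf.monotone_iterate_of_le_map hx₀) hu_conv
      refine squeeze_zero (fun _ => hp.nonneg _ _) (fun n => ?_) (by simpa using hux.const_mul c)
      rw [hp.comm, hp.comm (u n)]
      exact hcontr x (u n) (hle n)
  have hu_succ : Tendsto (fun n => p (f (u n)) x) atTop (𝓝 0) := by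
    simpa only [u, ← Function.iterate_succ_apply' f] using (tendsto_add_atTop_iff_nat 1).2 hux
  exact ⟨x, (hp.eq_of_tendsto_zero hu_succ hfu).symm, hxx⟩
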